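/- arXiv:2503.18189 — 8 statements merged into one kernel-verified Lean document; each statement's English description precedes it below -/
import Mathlib

section
/- Let Σ be a finite nonempty alphabet, let f_i : ℝⁿ → ℝⁿ (i ∈ Σ) be continuous maps with f_i(0) = 0, let G = (S, E) be a path-complete labeled digraph on Σ with S finite, and suppose there exist V_S = {V_s : s ∈ S} ⊆ Lyap₀(ℝⁿ) and γ > 1 admissible for G and {f_i}. Then 0 is uniformly globally asymptotically stable (UGAS) under the switched system x(k+1) = f_{σ(k)}(x(k)): (stability) for every ε > 0 there is δ > 0 such that for every switching signal σ : ℕ → Σ and every x₀ with ‖x₀‖₂ ≤ δ, the solution with x(0) = x₀ satisfies ‖x(k)‖₂ ≤ ε for all k ∈ ℕ; and (uniform global attractivity) for all r > 0 and ε > 0 there is K ∈ ℕ such that for every σ and every x₀ with ‖x₀‖₂ ≤ r, ‖x(k)‖₂ ≤ ε for all k ≥ K. -/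
open Filter

/-- A labeled digraph on node type `S` with alphabet `A`, given by its edge set,
is path-complete if every nonempty word is the label sequence of some path. -/
def PathComplete {S A : Type*} (E : Set (S × S × A)) : Prop :=
  ∀ w : List A, w ≠ [] → ∃ s : Fin (w.length + 1) → S,
    ∀ j : Fin w.length, (s j.castSucc, s j.succ, w.get j) ∈ E

/-- `G₁` (edge set `E₁`) simulates `G₂` (edge set `E₂`). -/
def Simulates {S₁ S₂ A : Type*} (E₁ : Set (S₁ × S₁ × A)) (E₂ : Set (S₂ × S₂ × A)) : Prop :=
  ∃ R : S₂ → S₁, ∀ a b i, (a, b, i) ∈ E₂ → (R a, R b, i) ∈ E₁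

/-- Simulation where the simulating graph has node set `V₁` inside ambient type `N₁`. -/
def SimulatesOn {N₁ N₂ A : Type*} (V₁ : Set N₁) (E₁ : Set (N₁ × N₁ × A))
    (E₂ : Set (N₂ × N₂ × A)) : Prop :=
  ∃ R : N₂ → N₁, (∀ s, R s ∈ V₁) ∧ ∀ a b i, (a, b, i) ∈ E₂ → (R a, R b, i) ∈ E₁

/-- Class K∞ function. -/
def IsKInfty (α : ℝ → ℝ) : Prop :=
  Continuous α ∧ StrictMono α ∧ α 0 = 0 ∧ Tendsto α atTop atTop

/-- Membership in `Lyap₀(ℝⁿ)`. -/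
def IsLyap {n : ℕ} (V : EuclideanSpace ℝ (Fin n) → ℝ) : Prop :=
  Continuous V ∧ V 0 = 0 ∧ (∀ x, x ≠ 0 → 0 < V x) ∧
  ∃ α₁ α₂ : ℝ → ℝ, IsKInfty α₁ ∧ IsKInfty α₂ ∧ ∀ x, α₁ ‖x‖ ≤ V x ∧ V x ≤ α₂ ‖x‖

/-- `(V_s)_{s}` together with `γ` is admissible for the graph with edge set `E`
and the switched maps `f`. -/
def Admissible {S A : Type*} {n : ℕ} (E : Set (S × S × A))
    (f : A → EuclideanSpace ℝ (Fin n) → EuclideanSpace ℝ (Fin n))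
    (V : S → EuclideanSpace ℝ (Fin n) → ℝ) (γ : ℝ) : Prop :=
  ∀ a b i, (a, b, i) ∈ E → ∀ x, V a x ≥ γ * V b (f i x)

/-- Edge set of the `T`-sum lift: nodes are multisets of size `T`. -/
def sumLiftEdgesT {S A : Type*} (E : Set (S × S × A)) (T : ℕ) :
    Set (Multiset S × Multiset S × A) :=
  { e | ∃ L : List (S × S), L.length = T ∧ (∀ p ∈ L, (p.1, p.2, e.2.2) ∈ E) ∧
      e.1 = ↑(L.map Prod.fst) ∧ e.2.1 = ↑(L.map Prod.snd) }

/-- Edge set of the sum lift `G^⊕` (union over all `T ≥ 1`). -/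
def sumLiftEdges {S A : Type*} (E : Set (S × S × A)) : Set (Multiset S × Multiset S × A) :=
  ⋃ T ∈ Set.Ici 1, sumLiftEdgesT E T

/-- Edge set of the `T`-forward composition lift `G^{∘T}`; a word `(j₁, …, j_T)` is
encoded as the list `[j₁, …, j_T]`.  For `T = 0` this is `G` itself (with empty words). -/
def fwdLiftEdges {S A : Type*} (E : Set (S × S × A)) :
    ℕ → Set ((S × List A) × (S × List A) × A)
  | 0 => { e | ∃ (a b : S) (i : A), (a, b, i) ∈ E ∧ e = ((a, []), (b, []), i) }
  | T + 1 => { e | ∃ (a b : S) (i : A) (l : List A) (jT : A), (a, b, i) ∈ E ∧ l.length = T ∧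
      e = ((a, l ++ [jT]), (b, i :: l), jT) }

/-- Edge set of the `T`-backward composition lift `G^{∘-T}`. -/
def bwdLiftEdges {S A : Type*} (E : Set (S × S × A)) :
    ℕ → Set ((S × List A) × (S × List A) × A)
  | 0 => { e | ∃ (a b : S) (i : A), (a, b, i) ∈ E ∧ e = ((a, []), (b, []), i) }
  | T + 1 => { e | ∃ (a b : S) (i : A) (l : List A) (jT : A), (a, b, i) ∈ E ∧ l.length = T ∧
      e = ((a, i :: l), (b, l ++ [jT]), jT) }

/-- The underlying undirected graph on node set `V` with labeled edge set `E` is connected. -/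
def ConnectedOn {N A : Type*} (V : Set N) (E : Set (N × N × A)) : Prop :=
  ∀ x ∈ V, ∀ y ∈ V,
    Relation.ReflTransGen (fun u v => ∃ i, (u, v, i) ∈ E ∨ (v, u, i) ∈ E) x y

/-- Transpose of a labeled digraph (reverse all edges). -/
def transposeEdges {S A : Type*} (E : Set (S × S × A)) : Set (S × S × A) :=
  { e | (e.2.1, e.1, e.2.2) ∈ E }

/-- Strong connectedness of a labeled digraph. -/
def StronglyConnectedEdges {S A : Type*} (E : Set (S × S × A)) : Prop :=
  ∀ x y : S, Relation.ReflTransGen (fun u v => ∃ i, (u, v, i) ∈ E) x y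

/-- A path-complete Lyapunov function with `γ > 1` certifies that the
origin is uniformly globally asymptotically stable for the switched system
`x(k+1) = f_{σ(k)}(x(k))`: (stability) and (uniform global attractivity). -/
theorem pclf_implies_UGAS {n : ℕ} {A S : Type*} [Fintype A] [Nonempty A] [Fintype S]
    (E : Set (S × S × A))
    (f : A → EuclideanSpace ℝ (Fin n) → EuclideanSpace ℝ (Fin n))
    (hf_cont : ∀ i, Continuous (f i)) (hf_zero : ∀ i, f i 0 = 0)
    (hpc : PathComplete E)
    (V : S → EuclideanSpace ℝ (Fin n) → ℝ) (hV : ∀ s, IsLyap (V s))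
    (γ : ℝ) (hγ : 1 < γ) (hadm : Admissible E f V γ) :
    (∀ ε > 0, ∃ δ > 0, ∀ (σ : ℕ → A) (x : ℕ → EuclideanSpace ℝ (Fin n)),
        (∀ k, x (k + 1) = f (σ k) (x k)) → ‖x 0‖ ≤ δ → ∀ k, ‖x k‖ ≤ ε) ∧
    (∀ r > 0, ∀ ε > 0, ∃ K : ℕ, ∀ (σ : ℕ → A) (x : ℕ → EuclideanSpace ℝ (Fin n)),
        (∀ k, x (k + 1) = f (σ k) (x k)) → ‖x 0‖ ≤ r → ∀ k ≥ K, ‖x k‖ ≤ ε) := by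
  classical
  obtain ⟨i₀⟩ := ‹Nonempty A›
  obtain ⟨sfun, -⟩ := hpc [i₀] (by simp)
  have hSne : Nonempty S := ⟨sfun 0⟩
  have hS : (Finset.univ : Finset S).Nonempty := Finset.univ_nonempty
  choose a1 a2 h1 h2 hb using fun s => (hV s).2.2.2
  have hγ0 : (0:ℝ) < γ := by linarith
  have hVnn : ∀ s y, 0 ≤ V s y := by
    intro s y
    rcases eq_or_ne y 0 with h | h
    · rw [h, (hV s).2.1]
    · exact le_of_lt ((hV s).2.2.1 y h)
  -- convenient form of path-completeness
  have pc' : ∀ (k : ℕ) (σ : ℕ → A), ∃ s : ℕ → S, ∀ j < k, (s j, s (j+1), σ j) ∈ E := by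
    intro k σ
    rcases Nat.eq_zero_or_pos k with hk | hk
    · exact ⟨fun _ => sfun 0, fun j hj => absurd hj (by omega)⟩
    · set w : List A := List.ofFn (fun j : Fin k => σ j) with hw
      have hlen : w.length = k := by simp [hw]
      obtain ⟨s, hs⟩ := hpc w (by
        intro h
        rw [h] at hlen
        simp at hlen
        omega)
      refine ⟨fun j => s ⟨min j w.length, by omega⟩, ?_⟩
      intro j hj
      have hj1 : j < w.length := by omega
      have hcast : w.get ⟨j, hj1⟩ = σ j := by
        simp [hw, List.getElem_ofFn]
      have := hs ⟨j, hj1⟩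
      rw [hcast] at this
      have e1 : (⟨min j w.length, by omega⟩ : Fin (w.length + 1))
          = Fin.castSucc ⟨j, hj1⟩ := Fin.ext (by simp; omega)
      have e2 : (⟨min (j+1) w.length, by omega⟩ : Fin (w.length + 1))
          = Fin.succ ⟨j, hj1⟩ := Fin.ext (by simp; omega)
      beta_reduce
      rw [e1, e2]
      exact this
  -- key decrease estimate along trajectories
  have key : ∀ (σ : ℕ → A) (x : ℕ → EuclideanSpace ℝ (Fin n)),
      (∀ k, x (k + 1) = f (σ k) (x k)) → ∀ k : ℕ,
      ∃ a b : S, γ ^ k * V b (x k) ≤ V a (x 0) := by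
    intro σ x hx k
    obtain ⟨s, hs⟩ := pc' k σ
    refine ⟨s 0, s k, ?_⟩
    have main : ∀ j, j ≤ k → γ ^ j * V (s j) (x j) ≤ V (s 0) (x 0) := by
      intro j
      induction j with
      | zero => intro _; simp
      | succ j ih =>
        intro hj
        have hjk : j < k := by omega
        have hdec := hadm _ _ _ (hs j hjk) (x j)
        rw [← hx j] at hdec
        calc γ ^ (j+1) * V (s (j+1)) (x (j+1))
            = γ ^ j * (γ * V (s (j+1)) (x (j+1))) := by ring
          _ ≤ γ ^ j * V (s j) (x j) := by
              exact mul_le_mul_of_nonneg_left hdec (pow_nonneg (le_of_lt hγ0) j)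
          _ ≤ V (s 0) (x 0) := ih (by omega)
    exact main k le_rfl
  have ha1mono : ∀ s, Monotone (a1 s) := fun s => (h1 s).2.1.monotone
  have ha2mono : ∀ s, Monotone (a2 s) := fun s => (h2 s).2.1.monotone
  have ha1pos : ∀ s, ∀ t : ℝ, 0 < t → 0 < a1 s t := by
    intro s t ht
    have := (h1 s).2.1 ht
    rwa [(h1 s).2.2.1] at this
  constructor
  · -- stability
    intro ε hε
    set c : ℝ := Finset.univ.inf' hS (fun s => a1 s ε) with hc
    have hcpos : 0 < c := by
      rw [hc, Finset.lt_inf'_iff]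
      exact fun s _ => ha1pos s ε hε
    have hδs : ∀ s : S, ∃ t : ℝ, 0 < t ∧ a2 s t < c := by
      intro s
      have hcont : Filter.Tendsto (a2 s) (nhds 0) (nhds 0) := by
        have hc0 := (h2 s).1.tendsto 0
        rwa [(h2 s).2.2.1] at hc0
      have hev : ∀ᶠ t in nhds (0:ℝ), a2 s t < c := hcont.eventually_lt_const hcpos
      rw [Metric.eventually_nhds_iff] at hev
      obtain ⟨d, hd, hdlt⟩ := hev
      exact ⟨d/2, by linarith, hdlt (by
        rw [Real.dist_eq, sub_zero, abs_of_pos (by linarith : (0:ℝ) < d/2)]; linarith)⟩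
    choose t htpos htlt using hδs
    set δ : ℝ := Finset.univ.inf' hS t with hδ
    have hδpos : 0 < δ := by
      rw [hδ, Finset.lt_inf'_iff]
      exact fun s _ => htpos s
    refine ⟨δ, hδpos, ?_⟩
    intro σ x hx h0 k
    by_contra hcon
    push_neg at hcon
    obtain ⟨a, b, hab⟩ := key σ x hx k
    have hlow : c ≤ V b (x k) := by
      calc c ≤ a1 b ε := Finset.inf'_le _ (Finset.mem_univ b)
        _ ≤ a1 b ‖x k‖ := ha1mono b (le_of_lt hcon)
        _ ≤ V b (x k) := (hb b (x k)).1
    have hup : V a (x 0) < c := by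
      calc V a (x 0) ≤ a2 a ‖x 0‖ := (hb a (x 0)).2
        _ ≤ a2 a (t a) := ha2mono a (le_trans h0 (Finset.inf'_le _ (Finset.mem_univ a)))
        _ < c := htlt a
    have hpow : (1:ℝ) ≤ γ ^ k := one_le_pow₀ (le_of_lt hγ)
    have : c ≤ γ ^ k * V b (x k) :=
      le_trans hlow (le_mul_of_one_le_left (hVnn b (x k)) hpow)
    linarith
  · -- uniform global attractivity
    intro r hr ε hε
    set c : ℝ := Finset.univ.inf' hS (fun s => a1 s ε) with hc
    have hcpos : 0 < c := by
      rw [hc, Finset.lt_inf'_iff]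
      exact fun s _ => ha1pos s ε hε
    set B : ℝ := Finset.univ.sup' hS (fun s => a2 s r) with hB
    have hpow := tendsto_pow_atTop_atTop_of_one_lt hγ
    obtain ⟨K, hK⟩ := (hpow.eventually_gt_atTop (B / c)).exists_forall_of_atTop
    refine ⟨K, ?_⟩
    intro σ x hx h0 k hk
    by_contra hcon
    push_neg at hcon
    obtain ⟨a, b, hab⟩ := key σ x hx k
    have hlow : c ≤ V b (x k) := by
      calc c ≤ a1 b ε := Finset.inf'_le _ (Finset.mem_univ b)
        _ ≤ a1 b ‖x k‖ := ha1mono b (le_of_lt hcon)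
        _ ≤ V b (x k) := (hb b (x k)).1
    have hup : V a (x 0) ≤ B := by
      calc V a (x 0) ≤ a2 a ‖x 0‖ := (hb a (x 0)).2
        _ ≤ a2 a r := ha2mono a h0
        _ ≤ B := Finset.le_sup' (fun s => a2 s r) (Finset.mem_univ a)
    have hgk : B / c < γ ^ k := hK k hk
    have hBlt : B < γ ^ k * c := (div_lt_iff₀ hcpos).mp hgk
    have : γ ^ k * c ≤ γ ^ k * V b (x k) :=
      mul_le_mul_of_nonneg_left hlow (pow_nonneg (le_of_lt hγ0) k)
    linarith
end

section
/- Let G = (S, E) be a path-complete labeled digraph on a finite alphabet Σ = {1, …, m} with S finite, let A₁, …, A_m ∈ ℝ^{n×n}, let r > 0, and suppose there exists V_S = {V_s : s ∈ S} ⊆ Lyap₀(ℝⁿ) such that V_a(x) ≥ V_b(r⁻¹ A_i x) for all x ∈ ℝⁿ and all edges (a, b, i) ∈ E. Then the joint spectral radius of {A₁, …, A_m} is at most r; precisely, limsup_{k → ∞} ( max over words (j₁, …, j_k) ∈ Σ^k of ‖A_{j_k} A_{j_{k−1}} ⋯ A_{j_1}‖ )^{1/k} ≤ r, where ‖·‖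 is the operator norm induced by the Euclidean norm. -/
open Filter

/-!
Along a path `s₀ → ⋯ → s_k` of `G` labelled by a word `w`, the edge inequalities chain to
`V_{s_k}(r⁻ᵏ A_w x) ≤ V_{s₀}(x)`, and path-completeness provides such a path for every word.
For `‖x‖ ≤ 1` the right side is at most a constant `C` (continuity, compactness of the ball,
finitely many nodes), and radial unboundedness of the `V_s` turns `V_{s_k}(y) ≤ C` into
`‖y‖ ≤ R`. Hence `‖A_w‖ ≤ R rᵏ`, and the `k`-th root of the maximum is at most `R^{1/k} r → r`.
-/

open Bornology Topology

section PathLyapunov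

variable {S ι X : Type*}

def IsLabeledPath (E : Set (S × S × ι)) (w : List ι) (s : Fin (w.length + 1) → S) : Prop :=
  ∀ j : Fin w.length, (s j.castSucc, s j.succ, w.get j) ∈ E

theorem IsLabeledPath.tail {E : Set (S × S × ι)} {i : ι} {w : List ι}
    {s : Fin ((i :: w).length + 1) → S} (hs : IsLabeledPath E (i :: w) s) :
    IsLabeledPath E w (fun j => s j.succ) := fun j => by
  have h := hs j.succ
  rw [← Fin.succ_castSucc] at h
  exact h

theorem IsLabeledPath.apply_prod_smul_le {M : Type*} [Monoid M] [MulAction M X]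
    {E : Set (S × S × ι)} {g : ι → M} {V : S → X → ℝ}
    (hE : ∀ a b i, (a, b, i) ∈ E → ∀ x, V b (g i • x) ≤ V a x)
    {w : List ι} {s : Fin (w.length + 1) → S} (hs : IsLabeledPath E w s) (x : X) :
    V (s (Fin.last _)) ((w.map g).reverse.prod • x) ≤ V (s 0) x := by
  induction w generalizing x with
  | nil => simp
  | cons i w ih =>
    calc V (s (Fin.last _)) (((i :: w).map g).reverse.prod • x)
        = V (s (Fin.last w.length).succ) ((w.map g).reverse.prod • g i • x) := by
          simp [List.prod_append, mul_smul]
      _ ≤ V (s (1 : Fin (w.length + 2))) (g i • x) := ih hs.tail _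
      _ ≤ V (s 0) x := hE _ _ _ (hs 0) x

section Sublevel

variable [NormedAddCommGroup X] {V : S → X → ℝ}

theorem exists_forall_le_of_norm_le_one [Finite S] [ProperSpace X] (hV : ∀ s, Continuous (V s)) :
    ∃ C, ∀ s x, ‖x‖ ≤ 1 → V s x ≤ C := by
  have hbdd s : ∃ C, ∀ x ∈ Metric.closedBall (0 : X) 1, V s x ≤ C := by
    obtain ⟨C, hC⟩ := (isCompact_closedBall 0 1).bddAbove_image (hV s).continuousOn
    exact ⟨C, fun x hx => hC (Set.mem_image_of_mem _ hx)⟩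
  choose C hC using hbdd
  obtain ⟨C', hC'⟩ := Finite.exists_le C
  exact ⟨C', fun s x hx => (hC s x (by simpa using hx)).trans (hC' s)⟩

theorem exists_norm_le_of_le_of_tendsto_cobounded [Finite S]
    (hV : ∀ s, Tendsto (V s) (cobounded X) atTop) (C : ℝ) :
    ∃ R, 0 < R ∧ ∀ s x, V s x ≤ C → ‖x‖ ≤ R := by
  have hR s : ∃ R, ∀ x, R ≤ ‖x‖ → C < V s x := by
    simpa using Filter.hasBasis_cobounded_norm.eventually_iff.mp ((hV s).eventually_gt_atTop C)
  choose R hR using hR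
  obtain ⟨R', hR'⟩ := Finite.exists_le R
  refine ⟨max R' 1, by positivity, fun s x hx => ?_⟩
  by_contra! hlt
  exact hx.not_gt (hR s x ((hR' s).trans ((le_max_left _ _).trans hlt.le)))

end Sublevel

theorem IsLyap.tendsto_cobounded {n : ℕ} {V : EuclideanSpace ℝ (Fin n) → ℝ} (hV : IsLyap V) :
    Tendsto V (cobounded _) atTop := by
  obtain ⟨α₁, _, hα₁, -, hbound⟩ := hV.2.2.2
  exact tendsto_atTop_mono (fun x => (hbound x).1) (hα₁.2.2.2.comp tendsto_norm_cobounded_atTop)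

theorem PathComplete.norm_prod_le [NormedAddCommGroup X] [NormedSpace ℝ X]
    {E : Set (S × S × ι)} {A : ι → X →L[ℝ] X} {V : S → X → ℝ} {r C R : ℝ}
    (hpc : PathComplete E) (hr : 0 < r)
    (hE : ∀ a b i, (a, b, i) ∈ E → ∀ x, V b (r⁻¹ • A i x) ≤ V a x)
    (hC : ∀ s x, ‖x‖ ≤ 1 → V s x ≤ C) (hR₀ : 0 ≤ R) (hR : ∀ s x, V s x ≤ C → ‖x‖ ≤ R)
    {w : List ι} (hw : w ≠ []) : ‖(w.map A).reverse.prod‖ ≤ R * r ^ w.length := by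
  obtain ⟨s, hs⟩ := hpc w hw
  have hscaled :
      (w.map (r⁻¹ • A ·)).reverse.prod = r⁻¹ ^ w.length • (w.map A).reverse.prod := by
    rw [show w.length = (w.map A).reverse.length by simp, List.smul_prod, List.map_reverse,
      List.map_map]
    rfl
  refine ContinuousLinearMap.opNorm_le_of_unit_norm (by positivity) fun x hx => ?_
  have hV := IsLabeledPath.apply_prod_smul_le (g := (r⁻¹ • A ·)) hE hs x
  have h := hR _ _ (hV.trans (hC _ x hx.le))
  rw [hscaled, ContinuousLinearMap.smul_def, smul_apply, norm_smul, inv_pow,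
    norm_inv, norm_pow, Real.norm_of_nonneg hr.le, inv_mul_le_iff₀ (by positivity)] at h
  linarith

theorem limsup_rpow_one_div_le_of_le_mul_pow {u : ℕ → ℝ} {R r : ℝ} (hu : ∀ k, 0 ≤ u k)
    (hR : 0 < R) (hr : 0 ≤ r) (hbound : ∀ᶠ k in atTop, u k ≤ R * r ^ k) :
    limsup (fun k : ℕ => u k ^ ((1 : ℝ) / k)) atTop ≤ r := by
  have hlim : Tendsto (fun k : ℕ => R ^ ((1 : ℝ) / k) * r) atTop (𝓝 r) := by
    simpa using ((Real.continuousAt_const_rpow hR.ne').tendsto.comp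
      tendsto_one_div_atTop_nhds_zero_nat).mul_const r
  refine (limsup_le_limsup ?_ (isCoboundedUnder_le_of_le atTop fun k => Real.rpow_nonneg (hu k) _)
    hlim.isBoundedUnder_le).trans hlim.limsup_eq.le
  filter_upwards [hbound, eventually_ge_atTop 1] with k hk hk₁
  calc u k ^ ((1 : ℝ) / k) ≤ (R * r ^ k) ^ ((1 : ℝ) / k) :=
        Real.rpow_le_rpow (hu k) hk (by positivity)
    _ = R ^ ((1 : ℝ) / k) * r := by
      rw [Real.mul_rpow hR.le (by positivity), ← Real.rpow_natCast, ← Real.rpow_mul hr,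
        mul_one_div_cancel (by positivity), Real.rpow_one]

end PathLyapunov

theorem pclf_jsr_bound_general {n m : ℕ} {S : Type*} [Fintype S]
    (E : Set (S × S × Fin m)) (hpc : PathComplete E)
    (A : Fin m → (EuclideanSpace ℝ (Fin n) →L[ℝ] EuclideanSpace ℝ (Fin n)))
    (r : ℝ) (hr : 0 < r)
    (V : S → EuclideanSpace ℝ (Fin n) → ℝ) (hV : ∀ s, IsLyap (V s))
    (hadm : ∀ a b i, (a, b, i) ∈ E → ∀ x, V a x ≥ V b (r⁻¹ • A i x)) :
    Filter.limsup (fun k : ℕ =>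
        (⨆ j : Fin k → Fin m, ‖(List.ofFn fun t => A (j t)).reverse.prod‖) ^ ((1 : ℝ) / k))
      Filter.atTop ≤ r := by
  obtain ⟨C, hC⟩ := exists_forall_le_of_norm_le_one fun s => (hV s).1
  obtain ⟨R, hR₀, hR⟩ :=
    exists_norm_le_of_le_of_tendsto_cobounded (fun s => (hV s).tendsto_cobounded) C
  refine limsup_rpow_one_div_le_of_le_mul_pow (fun k => Real.iSup_nonneg fun _ => norm_nonneg _)
    hR₀ hr.le ?_
  filter_upwards [eventually_ge_atTop 1] with k hk
  refine Real.iSup_le (fun j => ?_) (by positivity)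
  have hj : List.ofFn j ≠ [] := by simpa using Nat.one_le_iff_ne_zero.mp hk
  simpa [List.map_ofFn, Function.comp_def] using hpc.norm_prod_le hr hadm hC hR₀.le hR hj

/-- A path-complete Lyapunov function for the scaled maps `r⁻¹ Aᵢ`
certifies that the joint spectral radius of `{A₁, …, A_m}` is at most `r`:
`limsup_k (max over words of length k of ‖A_{j_k} ⋯ A_{j_1}‖)^{1/k} ≤ r`. -/
theorem pclf_jsr_bound {n m : ℕ} (hm : 1 ≤ m) {S : Type*} [Fintype S]
    (E : Set (S × S × Fin m)) (hpc : PathComplete E)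
    (A : Fin m → (EuclideanSpace ℝ (Fin n) →L[ℝ] EuclideanSpace ℝ (Fin n)))
    (r : ℝ) (hr : 0 < r)
    (V : S → EuclideanSpace ℝ (Fin n) → ℝ) (hV : ∀ s, IsLyap (V s))
    (hadm : ∀ a b i, (a, b, i) ∈ E → ∀ x, V a x ≥ V b (r⁻¹ • A i x)) :
    Filter.limsup (fun k : ℕ =>
        (⨆ j : Fin k → Fin m, ‖(List.ofFn fun t => A (j t)).reverse.prod‖) ^ ((1 : ℝ) / k))
      Filter.atTop ≤ r :=
  pclf_jsr_bound_general E hpc A r hr V hV hadm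
end

section
/- Let G₁ = (S₁, E₁) and G₂ = (S₂, E₂) be path-complete labeled digraphs on a finite alphabet Σ with finite node sets. Then the following are equivalent: (i) G₁ simulates G₂; (ii) G₁ ⪯ G₂, i.e., for every n ≥ 1, every family of continuous maps f_i : ℝⁿ → ℝⁿ with f_i(0) = 0 (i ∈ Σ), every set Γ ⊆ ℝ_{>0}, and every template V (a family of subsets V_m ⊆ C⁰(ℝ^m; ℝ), one for each dimension m): if there exist a family V_{S₁} = {V_s : s ∈ S₁} ⊆ V_n ∩ Lyap₀(ℝⁿ) and γ ∈ Γ admissible for G₁ and {f_i}, then there exist a family V_{S₂} = {V_s : s ∈ S₂} ⊆ V_n ∩ Lyap₀(ℝⁿ) and γ' ∈ Γ admissible for G₂ and {f_i}. -/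
open Filter

namespace PCAux

noncomputable section

variable {S A : Type*} [Fintype S] [Fintype A]

/-- spike center for node `s` -/
def ctr (s : S) : ℝ :=
  4/5 + ((Fintype.equivFin S s : ℕ) : ℝ) / (10 * (Fintype.card S : ℝ))

/-- spike function of node `s` -/
def sig (s : S) (t : ℝ) : ℝ := max 0 (1 - 30 * (Fintype.card S : ℝ) * |t - ctr s|)

/-- peak location of letter `i` -/
def pk (i : A) : ℝ := 2 * ((Fintype.equivFin A i : ℕ) : ℝ) + 3

/-- tent function of letter `i` -/
def tent (i : A) (r : ℝ) : ℝ := max 0 (1 - |r - pk i|)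

def Tsum (A : Type*) [Fintype A] (r : ℝ) : ℝ := ∑ i : A, tent i r

/-- the radial baseline function -/
def psi (A : Type*) [Fintype A] (r : ℝ) : ℝ :=
  max (min r (max (1/2) (2 - r))) (max (Tsum A r) (r - (2 * (Fintype.card A : ℝ) + 3/2)))

open Classical in
def chi (E : Set (S × S × A)) (a b : S) (i : A) : ℝ := if (a, b, i) ∈ E then 1 else 0

def Phi (E : Set (S × S × A)) (s : S) (r : ℝ) : ℝ :=
  sig s r + ∑ i : A, ∑ b : S, chi E s b i * sig b (tent i r)

/-- the radial Lyapunov function of node `s` -/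
def Wf (E : Set (S × S × A)) (s : S) (r : ℝ) : ℝ := psi A r + Phi E s r

lemma one_le_abs_natCast_sub {m n : ℕ} (h : m ≠ n) : (1:ℝ) ≤ |(m:ℝ) - (n:ℝ)| := by
  rcases h.lt_or_gt with hl | hl
  · have : (m:ℝ) + 1 ≤ n := by exact_mod_cast hl
    rw [abs_sub_comm, abs_of_nonneg (by linarith)]; linarith
  · have : (n:ℝ) + 1 ≤ m := by exact_mod_cast hl
    rw [abs_of_nonneg (by linarith)]; linarith

lemma ctr_mem (hN : 0 < Fintype.card S) (s : S) : 4/5 ≤ ctr s ∧ ctr s ≤ 9/10 := by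
  have hNR : (0:ℝ) < (Fintype.card S : ℝ) := by exact_mod_cast hN
  have h1 : ((Fintype.equivFin S s : ℕ) : ℝ) < (Fintype.card S : ℝ) := by
    exact_mod_cast (Fintype.equivFin S s).isLt
  have h0 : (0:ℝ) ≤ ((Fintype.equivFin S s : ℕ) : ℝ) := Nat.cast_nonneg _
  have hd : ((Fintype.equivFin S s : ℕ) : ℝ) / (10 * (Fintype.card S : ℝ)) ≤ 1/10 := by
    rw [div_le_iff₀ (by positivity)]; nlinarith
  have hd0 : (0:ℝ) ≤ ((Fintype.equivFin S s : ℕ) : ℝ) / (10 * (Fintype.card S : ℝ)) := by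
    positivity
  unfold ctr; constructor <;> linarith

lemma ctr_sep (hN : 0 < Fintype.card S) {s s' : S} (h : s ≠ s') :
    1 / (10 * (Fintype.card S : ℝ)) ≤ |ctr s - ctr s'| := by
  have hNR : (0:ℝ) < (Fintype.card S : ℝ) := by exact_mod_cast hN
  have key : ctr s - ctr s' =
      (((Fintype.equivFin S s : ℕ) : ℝ) - ((Fintype.equivFin S s' : ℕ) : ℝ))
        / (10 * (Fintype.card S : ℝ)) := by
    unfold ctr; ring
  have hne : (Fintype.equivFin S s : ℕ) ≠ (Fintype.equivFin S s' : ℕ) := by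
    intro hc
    exact h ((Fintype.equivFin S).injective (Fin.ext hc))
  have h10 : (0:ℝ) < 10 * (Fintype.card S : ℝ) := by linarith
  rw [key, abs_div, abs_of_pos h10, div_le_div_iff₀ h10 h10]
  nlinarith [one_le_abs_natCast_sub hne]

lemma sig_nonneg (s : S) (t : ℝ) : 0 ≤ sig s t := le_max_left _ _

lemma sig_le_one (s : S) (t : ℝ) : sig s t ≤ 1 := by
  have h : (0:ℝ) ≤ 30 * (Fintype.card S : ℝ) * |t - ctr s| := by positivity
  exact max_le (by norm_num) (by linarith)

lemma sig_self (s : S) : sig s (ctr s) = 1 := by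
  unfold sig; rw [sub_self, abs_zero, mul_zero, sub_zero]; norm_num

lemma sig_eq_zero (hN : 0 < Fintype.card S) {s : S} {t : ℝ}
    (hfar : 1 / (30 * (Fintype.card S : ℝ)) ≤ |t - ctr s|) : sig s t = 0 := by
  have hNR : (0:ℝ) < (Fintype.card S : ℝ) := by exact_mod_cast hN
  apply max_eq_left
  have : 30 * (Fintype.card S : ℝ) * (1 / (30 * (Fintype.card S : ℝ)))
      ≤ 30 * (Fintype.card S : ℝ) * |t - ctr s| := by gcongr
  rw [mul_one_div, div_self (by positivity)] at this
  linarith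

lemma inv30N_le (hN : 0 < Fintype.card S) :
    1 / (30 * (Fintype.card S : ℝ)) ≤ 1/10 := by
  have hNR : (1:ℝ) ≤ (Fintype.card S : ℝ) := by exact_mod_cast hN
  rw [div_le_div_iff₀ (by positivity) (by norm_num)]; linarith

lemma sig_zero_of_le (hN : 0 < Fintype.card S) {s : S} {t : ℝ} (ht : t ≤ 7/10) :
    sig s t = 0 := by
  have hc := ctr_mem hN s
  apply sig_eq_zero hN
  have : (1:ℝ)/10 ≤ ctr s - t := by linarith
  calc 1 / (30 * (Fintype.card S : ℝ)) ≤ 1/10 := inv30N_le hN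
    _ ≤ ctr s - t := this
    _ ≤ |ctr s - t| := le_abs_self _
    _ = |t - ctr s| := abs_sub_comm _ _

lemma sig_zero_of_ge (hN : 0 < Fintype.card S) {s : S} {t : ℝ} (ht : 1 ≤ t) :
    sig s t = 0 := by
  have hc := ctr_mem hN s
  apply sig_eq_zero hN
  calc 1 / (30 * (Fintype.card S : ℝ)) ≤ 1/10 := inv30N_le hN
    _ ≤ t - ctr s := by linarith
    _ ≤ |t - ctr s| := le_abs_self _

lemma pk_ge (i : A) : 3 ≤ pk i := by
  have : (0:ℝ) ≤ ((Fintype.equivFin A i : ℕ) : ℝ) := Nat.cast_nonneg _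
  unfold pk; linarith

lemma pk_le (i : A) : pk i ≤ 2 * (Fintype.card A : ℝ) + 1 := by
  have : ((Fintype.equivFin A i : ℕ) : ℝ) + 1 ≤ (Fintype.card A : ℝ) := by
    exact_mod_cast (Fintype.equivFin A i).isLt
  unfold pk; linarith

lemma pk_sep {i i' : A} (h : i ≠ i') : 2 ≤ |pk i - pk i'| := by
  have hne : (Fintype.equivFin A i : ℕ) ≠ (Fintype.equivFin A i' : ℕ) := by
    intro hc; exact h ((Fintype.equivFin A).injective (Fin.ext hc))
  have h1 := one_le_abs_natCast_sub hne
  have key : pk i - pk i' =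
      2 * (((Fintype.equivFin A i : ℕ) : ℝ) - ((Fintype.equivFin A i' : ℕ) : ℝ)) := by
    unfold pk; ring
  rw [key, abs_mul, abs_of_pos (by norm_num : (0:ℝ) < 2)]; linarith

lemma tent_nonneg (i : A) (r : ℝ) : 0 ≤ tent i r := le_max_left _ _

lemma tent_le_one (i : A) (r : ℝ) : tent i r ≤ 1 := by
  have h : (0:ℝ) ≤ |r - pk i| := abs_nonneg _
  exact max_le (by norm_num) (by linarith)

lemma tent_zero {i : A} {r : ℝ} (hfar : 1 ≤ |r - pk i|) : tent i r = 0 :=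
  max_eq_left (by linarith)

lemma tent_zero_of_le {i : A} {r : ℝ} (hr : r ≤ 2) : tent i r = 0 := by
  apply tent_zero
  have := pk_ge i
  calc (1:ℝ) ≤ pk i - r := by linarith
    _ ≤ |pk i - r| := le_abs_self _
    _ = |r - pk i| := abs_sub_comm _ _

lemma tent_peak (i : A) {t : ℝ} (h0 : 0 ≤ t) (h1 : t ≤ 1) :
    tent i (pk i - 1 + t) = t := by
  unfold tent
  have : |pk i - 1 + t - pk i| = 1 - t := by
    rw [show pk i - 1 + t - pk i = -(1 - t) by ring, abs_neg, abs_of_nonneg (by linarith)]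
  have h2 : (1:ℝ) - |pk i - 1 + t - pk i| = t := by rw [this]; ring
  rw [h2]
  exact max_eq_right h0

lemma tent_peak_other {i i' : A} (hne : i' ≠ i) {t : ℝ} (h0 : 0 ≤ t) (h1 : t ≤ 1) :
    tent i' (pk i - 1 + t) = 0 := by
  apply tent_zero
  have hsep := pk_sep hne
  have htri : |pk i' - pk i| ≤ |pk i' - (pk i - 1 + t)| + |pk i - 1 + t - pk i| :=
    abs_sub_le _ _ _
  have h2 : |pk i - 1 + t - pk i| = 1 - t := by
    rw [show pk i - 1 + t - pk i = -(1 - t) by ring, abs_neg, abs_of_nonneg (by linarith)]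
  rw [abs_sub_comm] at htri
  rw [h2] at htri
  rw [abs_sub_comm]
  rw [abs_sub_comm (pk i') (pk i)] at hsep
  linarith

lemma Tsum_nonneg (r : ℝ) : 0 ≤ Tsum A r :=
  Finset.sum_nonneg fun i _ => tent_nonneg i r

lemma Tsum_zero_of_le {r : ℝ} (hr : r ≤ 2) : Tsum A r = 0 :=
  Finset.sum_eq_zero fun i _ => tent_zero_of_le hr

lemma tent_le_Tsum (i : A) (r : ℝ) : tent i r ≤ Tsum A r :=
  Finset.single_le_sum (fun j _ => tent_nonneg j r) (Finset.mem_univ i)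

lemma Tsum_le_card (r : ℝ) : Tsum A r ≤ (Fintype.card A : ℝ) := by
  calc Tsum A r ≤ ∑ _i : A, (1:ℝ) := Finset.sum_le_sum fun i _ => tent_le_one i r
    _ = (Fintype.card A : ℝ) := by simp

lemma Tsum_eq_tent {r : ℝ} (i : A) (h : ∀ i', i' ≠ i → tent i' r = 0) :
    Tsum A r = tent i r :=
  Finset.sum_eq_single i (fun b _ hb => h b hb) (fun h => absurd (Finset.mem_univ i) h)

lemma psi_nonneg (r : ℝ) : 0 ≤ psi A r :=
  le_trans (Tsum_nonneg r) (le_trans (le_max_left _ _) (le_max_right _ _))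

lemma tent_le_psi (i : A) (r : ℝ) : tent i r ≤ psi A r :=
  le_trans (tent_le_Tsum i r) (le_trans (le_max_left _ _) (le_max_right _ _))

lemma psi_le_rM {r : ℝ} (hr : 0 ≤ r) : psi A r ≤ r + (Fintype.card A : ℝ) := by
  have hM : (0:ℝ) ≤ (Fintype.card A : ℝ) := Nat.cast_nonneg _
  exact max_le (le_trans (min_le_left _ _) (by linarith))
    (max_le (le_trans (Tsum_le_card r) (by linarith)) (by linarith))

lemma psi_le_self {r : ℝ} (hr0 : 0 ≤ r) (hr : r ≤ 2) : psi A r ≤ r := by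
  have hM : (0:ℝ) ≤ (Fintype.card A : ℝ) := Nat.cast_nonneg _
  exact max_le (min_le_left _ _)
    (max_le (by rw [Tsum_zero_of_le hr]; exact hr0) (by linarith))

lemma psi_id {t : ℝ} (h0 : 0 ≤ t) (h1 : t ≤ 1) : psi A t = t := by
  refine le_antisymm (psi_le_self h0 (by linarith)) ?_
  refine le_trans (le_min le_rfl ?_) (le_max_left _ _)
  exact le_trans (by linarith) (le_max_right (1/2) (2 - t))

lemma psi_pos {r : ℝ} (hr : 0 < r) : 0 < psi A r := by
  have : 0 < min r (max (1/2) (2 - r)) :=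
    lt_min hr (lt_of_lt_of_le (by norm_num) (le_max_left _ _))
  exact lt_of_lt_of_le this (le_max_left _ _)

lemma psi_ge_lin {r : ℝ} (hr : 0 ≤ r) :
    r / (4 * (Fintype.card A : ℝ) + 4) ≤ psi A r := by
  have hM : (0:ℝ) ≤ (Fintype.card A : ℝ) := Nat.cast_nonneg _
  have hden : (0:ℝ) < 4 * (Fintype.card A : ℝ) + 4 := by linarith
  have hle : r / (4 * (Fintype.card A : ℝ) + 4) ≤ r := div_le_self hr (by linarith)
  rcases le_or_gt r (2 * (Fintype.card A : ℝ) + 2) with h2 | h2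
  · have hh : r / (4 * (Fintype.card A : ℝ) + 4) ≤ 1/2 := by
      rw [div_le_iff₀ hden]; linarith
    exact le_trans (le_min hle (le_trans hh (le_max_left _ _))) (le_max_left _ _)
  · refine le_trans ?_ (le_trans (le_max_right (Tsum A r) _) (le_max_right _ _))
    rw [div_le_iff₀ hden]
    nlinarith

lemma psi_peak (i : A) {t : ℝ} (ht1 : 1/2 < t) (ht2 : t ≤ 1) :
    psi A (pk i - 1 + t) = t := by
  set r := pk i - 1 + t with hrdef
  have hpk3 := pk_ge i
  have hpkM := pk_le i
  have htr : tent i r = t := tent_peak i (by linarith) ht2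
  have hT : Tsum A r = t := by
    rw [Tsum_eq_tent i (fun i' hne => tent_peak_other hne (by linarith) ht2)]
    exact htr
  refine le_antisymm ?_ ?_
  · refine max_le (le_trans (min_le_right _ _) (max_le (by linarith) (by linarith))) ?_
    exact max_le (le_of_eq hT) (by linarith)
  · rw [← htr]; exact tent_le_psi i r

lemma chi_nonneg (E : Set (S × S × A)) (a b : S) (i : A) : 0 ≤ chi E a b i := by
  unfold chi; split <;> norm_num

lemma chi_le_one (E : Set (S × S × A)) (a b : S) (i : A) : chi E a b i ≤ 1 := by
  unfold chi; split <;> norm_num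

lemma Phi_nonneg (E : Set (S × S × A)) (s : S) (r : ℝ) : 0 ≤ Phi E s r := by
  refine add_nonneg (sig_nonneg s r) ?_
  refine Finset.sum_nonneg fun i _ => Finset.sum_nonneg fun b _ => ?_
  exact mul_nonneg (chi_nonneg E s b i) (sig_nonneg b _)

lemma Phi_le (E : Set (S × S × A)) (s : S) (r : ℝ) :
    Phi E s r ≤ 1 + (Fintype.card A : ℝ) * (Fintype.card S : ℝ) := by
  refine add_le_add (sig_le_one s r) ?_
  calc ∑ i : A, ∑ b : S, chi E s b i * sig b (tent i r)
      ≤ ∑ _i : A, ∑ _b : S, (1:ℝ) := by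
        refine Finset.sum_le_sum fun i _ => Finset.sum_le_sum fun b _ => ?_
        calc chi E s b i * sig b (tent i r) ≤ 1 * 1 := by
              exact mul_le_mul (chi_le_one E s b i) (sig_le_one b _)
                (sig_nonneg b _) (by norm_num)
          _ = 1 := by norm_num
    _ = (Fintype.card A : ℝ) * (Fintype.card S : ℝ) := by simp [mul_comm]

lemma Phi_zero_small (hN : 0 < Fintype.card S) (E : Set (S × S × A)) (s : S)
    {r : ℝ} (hr : r ≤ 7/10) : Phi E s r = 0 := by
  unfold Phi
  rw [sig_zero_of_le hN hr, zero_add]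
  refine Finset.sum_eq_zero fun i _ => Finset.sum_eq_zero fun b _ => ?_
  rw [tent_zero_of_le (by linarith), sig_zero_of_le hN (by norm_num), mul_zero]

lemma Phi_on_unit (hN : 0 < Fintype.card S) (E : Set (S × S × A)) (b : S)
    {t : ℝ} (ht : t ≤ 2) : Phi E b t = sig b t := by
  unfold Phi
  rw [Finset.sum_eq_zero, add_zero]
  intro i _
  refine Finset.sum_eq_zero fun b' _ => ?_
  rw [tent_zero_of_le ht, sig_zero_of_le hN (by norm_num), mul_zero]

lemma Phi_ge_edge (hN : 0 < Fintype.card S) {E : Set (S × S × A)} {a b : S} {i : A}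
    (h : (a, b, i) ∈ E) (r : ℝ) : sig b (tent i r) ≤ Phi E a r := by
  have hchi : chi E a b i = 1 := by unfold chi; exact if_pos h
  have h1 : sig b (tent i r) = chi E a b i * sig b (tent i r) := by rw [hchi, one_mul]
  rw [h1]
  refine le_trans (Finset.single_le_sum (f := fun b' => chi E a b' i * sig b' (tent i r))
    (fun b' _ => mul_nonneg (chi_nonneg E a b' i) (sig_nonneg b' _)) (Finset.mem_univ b)) ?_
  refine le_trans (Finset.single_le_sum
    (f := fun i' => ∑ b' : S, chi E a b' i' * sig b' (tent i' r))
    (fun i' _ => Finset.sum_nonneg fun b' _ =>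
      mul_nonneg (chi_nonneg E a b' i') (sig_nonneg b' _)) (Finset.mem_univ i)) ?_
  exact le_add_of_nonneg_left (sig_nonneg a r)

lemma Phi_xstar (hN : 0 < Fintype.card S) (E : Set (S × S × A)) (a b : S) (i : A) :
    Phi E a (pk i - 1 + ctr b) = chi E a b i := by
  set r := pk i - 1 + ctr b with hrdef
  have hcb := ctr_mem hN b
  have hpk3 := pk_ge i
  have h1 : sig a r = 0 := sig_zero_of_ge hN (by simp only [hrdef]; linarith)
  have htent : tent i r = ctr b := tent_peak i (by linarith) (by linarith)
  unfold Phi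
  rw [h1, zero_add]
  rw [Finset.sum_eq_single i]
  · rw [htent]
    rw [Finset.sum_eq_single b]
    · rw [sig_self, mul_one]
    · intro b' _ hb'
      rw [sig_eq_zero hN ?_, mul_zero]
      calc 1 / (30 * (Fintype.card S : ℝ)) ≤ 1 / (10 * (Fintype.card S : ℝ)) := by
            have hNR : (0:ℝ) < (Fintype.card S : ℝ) := by exact_mod_cast hN
            gcongr <;> linarith
        _ ≤ |ctr b - ctr b'| := ctr_sep hN (Ne.symm hb')
    · intro h; exact absurd (Finset.mem_univ b) h
  · intro i' _ hi'
    refine Finset.sum_eq_zero fun b' _ => ?_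
    rw [tent_peak_other hi' (by linarith) (by linarith),
      sig_zero_of_le hN (by norm_num), mul_zero]
  · intro h; exact absurd (Finset.mem_univ i) h

lemma Wf_adm (hN : 0 < Fintype.card S) {E : Set (S × S × A)} {a b : S} {i : A}
    (h : (a, b, i) ∈ E) (r : ℝ) : Wf E b (tent i r) ≤ Wf E a r := by
  have h0 := tent_nonneg i r
  have h1 := tent_le_one i r
  unfold Wf
  rw [psi_id h0 h1, Phi_on_unit hN E b (by linarith)]
  exact add_le_add (tent_le_psi i r) (Phi_ge_edge hN h r)

lemma sig_cont (s : S) : Continuous (sig s) := by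
  unfold sig; fun_prop

lemma tent_cont (i : A) : Continuous (tent i) := by
  unfold tent; fun_prop

lemma Tsum_cont : Continuous (Tsum A) := by
  unfold Tsum; exact continuous_finset_sum _ fun i _ => tent_cont i

lemma psi_cont : Continuous (psi A) := by
  unfold psi
  refine Continuous.max (Continuous.min continuous_id ?_) (Continuous.max Tsum_cont ?_)
  · fun_prop
  · fun_prop

lemma Phi_cont (E : Set (S × S × A)) (s : S) : Continuous (Phi E s) := by
  unfold Phi
  refine Continuous.add (sig_cont s) (continuous_finset_sum _ fun i _ =>
    continuous_finset_sum _ fun b _ => ?_)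
  exact Continuous.mul continuous_const ((sig_cont b).comp (tent_cont i))

lemma Wf_cont (E : Set (S × S × A)) (s : S) : Continuous (Wf E s) := by
  unfold Wf; exact psi_cont.add (Phi_cont E s)

lemma chi_ge_one {E : Set (S × S × A)} {a b : S} {i : A} (h : 1 ≤ chi E a b i) :
    (a, b, i) ∈ E := by
  by_contra hc
  unfold chi at h
  rw [if_neg hc] at h
  linarith

lemma key_ineq (hN : 0 < Fintype.card S) {E : Set (S × S × A)} {a b : S} {i : A}
    (h : Wf E b (tent i (pk i - 1 + ctr b)) ≤ Wf E a (pk i - 1 + ctr b)) :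
    (a, b, i) ∈ E := by
  have hcb := ctr_mem hN b
  have htent : tent i (pk i - 1 + ctr b) = ctr b := tent_peak i (by linarith) (by linarith)
  rw [htent] at h
  unfold Wf at h
  rw [psi_peak i (by linarith) (by linarith), Phi_xstar hN E a b i,
    psi_id (by linarith) (by linarith), Phi_on_unit hN E b (by linarith),
    sig_self] at h
  exact chi_ge_one (by linarith)

lemma Wf_isLyap (hN : 0 < Fintype.card S) (E : Set (S × S × A)) (s : S) {n : ℕ} :
    IsLyap (fun x : EuclideanSpace ℝ (Fin n) => Wf E s ‖x‖) := by
  have hM : (0:ℝ) ≤ (Fintype.card A : ℝ) := Nat.cast_nonneg _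
  have hNS : (0:ℝ) ≤ (Fintype.card S : ℝ) := Nat.cast_nonneg _
  have hC0 : (0:ℝ) ≤ (Fintype.card A : ℝ) + (1 + (Fintype.card A : ℝ) * (Fintype.card S : ℝ)) := by
    positivity
  refine ⟨(Wf_cont E s).comp continuous_norm, ?_, ?_, ?_⟩
  · show Wf E s ‖(0 : EuclideanSpace ℝ (Fin n))‖ = 0
    rw [norm_zero]
    unfold Wf
    rw [psi_id le_rfl zero_le_one, Phi_zero_small hN E s (by norm_num)]
    norm_num
  · intro x hx
    have hx' : 0 < ‖x‖ := norm_pos_iff.mpr hx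
    have h1 := Phi_nonneg E s ‖x‖
    have h2 := psi_pos (A := A) hx'
    show 0 < Wf E s ‖x‖
    unfold Wf; linarith
  · refine ⟨fun u => u / (4 * (Fintype.card A : ℝ) + 4),
      fun u => u + ((Fintype.card A : ℝ) + (1 + (Fintype.card A : ℝ) * (Fintype.card S : ℝ)))
        * min 1 (max 0 (10 * u - 6)), ⟨?_, ?_, ?_, ?_⟩, ⟨?_, ?_, ?_, ?_⟩, ?_⟩
    · fun_prop
    · intro u v huv
      dsimp only
      gcongr
    · exact zero_div _
    · exact Tendsto.atTop_div_const (by positivity) tendsto_id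
    · fun_prop
    · intro u v huv
      have hm : min 1 (max 0 (10 * u - 6)) ≤ min 1 (max 0 (10 * v - 6)) :=
        min_le_min le_rfl (max_le_max le_rfl (by linarith))
      have := mul_le_mul_of_nonneg_left hm hC0
      dsimp only
      linarith
    · norm_num
    · refine tendsto_atTop_mono (fun u => ?_) tendsto_id
      have h0 : (0:ℝ) ≤ min 1 (max 0 (10 * u - 6)) :=
        le_min zero_le_one (le_max_left _ _)
      have := mul_le_mul_of_nonneg_left h0 hC0
      show u ≤ u + _
      nlinarith
    · intro x
      dsimp only
      have hr : (0:ℝ) ≤ ‖x‖ := norm_nonneg x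
      constructor
      · calc ‖x‖ / (4 * (Fintype.card A : ℝ) + 4) ≤ psi A ‖x‖ := psi_ge_lin hr
          _ ≤ Wf E s ‖x‖ := le_add_of_nonneg_right (Phi_nonneg E s ‖x‖)
      · rcases le_or_gt ‖x‖ (7/10) with h | h
        · have hphi : Phi E s ‖x‖ = 0 := Phi_zero_small hN E s h
          have hpsi : psi A ‖x‖ ≤ ‖x‖ := psi_le_self hr (by linarith)
          have h0 : (0:ℝ) ≤ min 1 (max 0 (10 * ‖x‖ - 6)) :=
            le_min zero_le_one (le_max_left _ _)
          have h00 := mul_le_mul_of_nonneg_left h0 hC0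
          show psi A ‖x‖ + Phi E s ‖x‖ ≤ _
          rw [hphi]
          nlinarith
        · have hmin : min 1 (max 0 (10 * ‖x‖ - 6)) = 1 :=
            min_eq_left (le_max_of_le_right (by linarith))
          have h1 : psi A ‖x‖ ≤ ‖x‖ + (Fintype.card A : ℝ) := psi_le_rM hr
          have h2 : Phi E s ‖x‖ ≤ 1 + (Fintype.card A : ℝ) * (Fintype.card S : ℝ) :=
            Phi_le E s ‖x‖
          show psi A ‖x‖ + Phi E s ‖x‖ ≤ _
          rw [hmin]
          linarith

end

end PCAux


/-- For path-complete graphs, `G₁` simulates `G₂` if and only if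
`G₁ ⪯ G₂`: for every dimension, every switched system, every `Γ ⊆ ℝ_{>0}` and every
template, admissibility of some family and some `γ ∈ Γ` for `G₁` implies the same for `G₂`. -/
theorem simulates_iff_preorder {S₁ S₂ A : Type*} [Fintype S₁] [Fintype S₂] [Fintype A]
    (E₁ : Set (S₁ × S₁ × A)) (E₂ : Set (S₂ × S₂ × A))
    (h₁ : PathComplete E₁) (h₂ : PathComplete E₂) :
    Simulates E₁ E₂ ↔
      (∀ n : ℕ, 1 ≤ n →
        ∀ f : A → EuclideanSpace ℝ (Fin n) → EuclideanSpace ℝ (Fin n),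
          (∀ i, Continuous (f i)) → (∀ i, f i 0 = 0) →
        ∀ Γ : Set ℝ, Γ ⊆ Set.Ioi (0 : ℝ) →
        ∀ 𝒱 : (m : ℕ) → Set (EuclideanSpace ℝ (Fin m) → ℝ),
          (∀ m, ∀ W ∈ 𝒱 m, Continuous W) →
        (∃ (V : S₁ → EuclideanSpace ℝ (Fin n) → ℝ) (γ : ℝ), γ ∈ Γ ∧
            (∀ s, V s ∈ 𝒱 n ∧ IsLyap (V s)) ∧ Admissible E₁ f V γ) →
        (∃ (V : S₂ → EuclideanSpace ℝ (Fin n) → ℝ) (γ' : ℝ), γ' ∈ Γ ∧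
            (∀ s, V s ∈ 𝒱 n ∧ IsLyap (V s)) ∧ Admissible E₂ f V γ')) := by
  constructor
  · rintro ⟨R, hR⟩ n hn f hf hf0 Γ hΓ 𝒱 h𝒱 ⟨V, γ, hγ, hV, hadm⟩
    exact ⟨fun s => V (R s), γ, hγ, fun s => hV (R s),
      fun a b i h x => hadm _ _ _ (hR a b i h) x⟩
  · intro hyp
    classical
    have hnorme : ‖(EuclideanSpace.single (0 : Fin 1) (1:ℝ))‖ = 1 := by
      rw [EuclideanSpace.norm_single]; norm_num
    set f : A → EuclideanSpace ℝ (Fin 1) → EuclideanSpace ℝ (Fin 1) :=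
      fun i x => PCAux.tent i ‖x‖ • EuclideanSpace.single (0 : Fin 1) (1:ℝ) with hfdef
    have hnormf : ∀ (i : A) (x : EuclideanSpace ℝ (Fin 1)),
        ‖f i x‖ = PCAux.tent i ‖x‖ := by
      intro i x
      rw [hfdef]
      simp only
      rw [norm_smul, hnorme, mul_one, Real.norm_eq_abs,
        abs_of_nonneg (PCAux.tent_nonneg i ‖x‖)]
    have hprem : ∃ (V : S₁ → EuclideanSpace ℝ (Fin 1) → ℝ) (γ : ℝ), γ ∈ ({1} : Set ℝ) ∧
        (∀ s, V s ∈ {U : EuclideanSpace ℝ (Fin 1) → ℝ |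
            ∃ s' : S₁, U = fun x => PCAux.Wf E₁ s' ‖x‖} ∧ IsLyap (V s)) ∧
        Admissible E₁ f V γ := by
      refine ⟨fun s => fun x => PCAux.Wf E₁ s ‖x‖, 1, rfl, ?_, ?_⟩
      · intro s
        have hN : 0 < Fintype.card S₁ := Fintype.card_pos_iff.mpr ⟨s⟩
        exact ⟨⟨s, rfl⟩, PCAux.Wf_isLyap hN E₁ s⟩
      · intro a b i hE x
        have hN : 0 < Fintype.card S₁ := Fintype.card_pos_iff.mpr ⟨a⟩
        show PCAux.Wf E₁ a ‖x‖ ≥ 1 * PCAux.Wf E₁ b ‖f i x‖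
        rw [one_mul, hnormf]
        exact PCAux.Wf_adm hN hE ‖x‖
    obtain ⟨V₂, γ', hγ', hV₂, hadm₂⟩ := hyp 1 le_rfl f
      (fun i => Continuous.smul ((PCAux.tent_cont i).comp continuous_norm) continuous_const)
      (fun i => by
        show PCAux.tent i ‖(0 : EuclideanSpace ℝ (Fin 1))‖ •
          (EuclideanSpace.single (0 : Fin 1) (1:ℝ)) = 0
        rw [norm_zero, PCAux.tent_zero_of_le (by norm_num), zero_smul])
      {1}
      (by
        intro x hx
        rw [Set.mem_singleton_iff] at hx
        subst hx
        exact Set.mem_Ioi.mpr one_pos)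
      (fun m => {U : EuclideanSpace ℝ (Fin m) → ℝ | ∃ s' : S₁, U = fun x => PCAux.Wf E₁ s' ‖x‖})
      (by
        rintro m U ⟨s', rfl⟩
        exact (PCAux.Wf_cont E₁ s').comp continuous_norm)
      hprem
    choose R hRdef using fun s => (hV₂ s).1
    refine ⟨R, fun a b i hE => ?_⟩
    have hN : 0 < Fintype.card S₁ := Fintype.card_pos_iff.mpr ⟨R a⟩
    have hγ'1 : γ' = 1 := hγ'
    have hcb := PCAux.ctr_mem hN (R b)
    have hpk3 := PCAux.pk_ge i
    have hx : ‖(PCAux.pk i - 1 + PCAux.ctr (R b)) •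
        (EuclideanSpace.single (0 : Fin 1) (1:ℝ))‖ = PCAux.pk i - 1 + PCAux.ctr (R b) := by
      rw [norm_smul, hnorme, mul_one, Real.norm_eq_abs, abs_of_nonneg (by linarith)]
    have key := hadm₂ a b i hE
      ((PCAux.pk i - 1 + PCAux.ctr (R b)) • (EuclideanSpace.single (0 : Fin 1) (1:ℝ)))
    rw [hRdef a, hRdef b] at key
    simp only [hγ'1, one_mul] at key
    rw [hnormf, hx] at key
    exact PCAux.key_ineq hN key
end

section
/- The T-sum-lift characterization fails when restricted to quadratic forms and invertible linear maps. Concretely, for the path-complete graphs G₁ and G₂ the following both hold: (a) for every n ≥ 1, every pair of invertible matrices A₁, A₂ ∈ GL(n, ℝ), every γ > 0, and every pair of positive-definite quadratic forms V_b, V_c on ℝⁿ satisfying V_b(x) ≥ γ V_b(A₁ x), V_b(x) ≥ γ V_c(A₂ x), V_c(x) ≥ γ V_c(A₂ x) and V_c(x) ≥ γ V_b(A₁ x) for all x ∈ ℝⁿ (the inequalities of G₁), there exist positive-definite quadratic forms V_{b'}, V_{c'} on ℝⁿ satisfying V_{b'}(x) ≥ γ V_{b'}(A₁ x), V_{b'}(x)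 ≥ γ V_{c'}(A₁ x), V_{c'}(x) ≥ γ V_{c'}(A₂ x) and V_{c'}(x) ≥ γ V_{b'}(A₂ x) for all x ∈ ℝⁿ (the inequalities of G₂); yet (b) the sum lift G₁^⊕ does not simulate G₂. -/
open Filter

/-- Graph `G₁` from Example 3.9: nodes `b = 0`, `c = 1`; labels `1 = 0`, `2 = 1`. -/
def G1edges : Set (Fin 2 × Fin 2 × Fin 2) :=
  {(0, 0, 0), (0, 1, 1), (1, 1, 1), (1, 0, 0)}

/-- Graph `G₂` from Example 3.9: nodes `b' = 0`, `c' = 1`; labels `1 = 0`, `2 = 1`. -/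
def G2edges : Set (Fin 2 × Fin 2 × Fin 2) :=
  {(0, 0, 0), (0, 1, 0), (1, 1, 1), (1, 0, 1)}

/-- The quadratic form `x ↦ xᵀ P x`. -/
def quadForm {n : ℕ} (P : Matrix (Fin n) (Fin n) ℝ) (x : Fin n → ℝ) : ℝ :=
  dotProduct x (P.mulVec x)

/-!
For (a), pull the forms of `G₁` back along the map labelling the outgoing edges of the
corresponding node of `G₂`: `V_{b'} := γ V_b ∘ A₁` and `V_{c'} := γ V_c ∘ A₂`. Each inequality
of `G₂` at `x` is then `γ` times an inequality of `G₁` at `A₁ x` or `A₂ x`.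

For (b), every edge of `G₁` labelled `i` ends at node `i`, so every element of the target of an
edge of `G₁^⊕` labelled `i` equals `i`. The node `c'` of `G₂` has incoming edges with both
labels, so its image under a simulation would be an empty multiset.
-/

open Matrix

section Pullback

variable {n : ℕ}

def scaledPullback (γ : ℝ) (A P : Matrix (Fin n) (Fin n) ℝ) : Matrix (Fin n) (Fin n) ℝ :=
  γ • (Aᵀ * P * A)

lemma quadForm_scaledPullback (γ : ℝ) (A P : Matrix (Fin n) (Fin n) ℝ) (x : Fin n → ℝ) :
    quadForm (scaledPullback γ A P) x = γ * quadForm P (A *ᵥ x) := by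
  rw [scaledPullback, quadForm, quadForm, smul_mulVec, dotProduct_smul, smul_eq_mul,
    ← mulVec_mulVec, ← mulVec_mulVec, dotProduct_mulVec, vecMul_transpose]

lemma Matrix.PosDef.scaledPullback {P A : Matrix (Fin n) (Fin n) ℝ} (hP : P.PosDef) (hA : IsUnit A)
    {γ : ℝ} (hγ : 0 < γ) : (scaledPullback γ A P).PosDef := by
  rw [_root_.scaledPullback, ← conjTranspose_eq_transpose_of_trivial]
  exact (hP.conjTranspose_mul_mul_same (mulVec_injective_iff_isUnit.mpr hA)).smul hγ

lemma quadForm_scaledPullback_le {γ : ℝ} (hγ : 0 ≤ γ) {P Q B : Matrix (Fin n) (Fin n) ℝ}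
    (h : ∀ y, γ * quadForm Q (B *ᵥ y) ≤ quadForm P y) (A : Matrix (Fin n) (Fin n) ℝ)
    (x : Fin n → ℝ) :
    γ * quadForm (scaledPullback γ B Q) (A *ᵥ x) ≤ quadForm (scaledPullback γ A P) x := by
  rw [quadForm_scaledPullback, quadForm_scaledPullback, mulVec_mulVec, ← mulVec_mulVec]
  exact mul_le_mul_of_nonneg_left (h (A *ᵥ x)) hγ

end Pullback

lemma exists_edge_of_mem_sumLiftEdges {S A : Type*} {E : Set (S × S × A)}
    {M N : Multiset S} {i : A} (h : (M, N, i) ∈ sumLiftEdges E) {a : S} (ha : a ∈ N) :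
    ∃ s, (s, a, i) ∈ E := by
  simp only [sumLiftEdges, Set.mem_iUnion] at h
  obtain ⟨T, -, L, -, hL, -, hN⟩ := h
  rw [show N = ↑(L.map Prod.snd) from hN, Multiset.mem_coe, List.mem_map] at ha
  obtain ⟨p, hp, rfl⟩ := ha
  exact ⟨p.1, hL p hp⟩

lemma eq_label_of_mem_G1edges {a b i : Fin 2} (h : (a, b, i) ∈ G1edges) : b = i := by
  fin_cases a <;> fin_cases b <;> fin_cases i <;> simp_all [G1edges]

lemma eq_label_of_mem_sumLiftEdges_G1edges {M N : Multiset (Fin 2)} {i : Fin 2}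
    (h : (M, N, i) ∈ sumLiftEdges G1edges) {a : Fin 2} (ha : a ∈ N) : a = i :=
  let ⟨_, hs⟩ := exists_edge_of_mem_sumLiftEdges h ha
  eq_label_of_mem_G1edges hs

/-- Corollary: quadratic forms cannot be ordered through a sum lift.
(a) `G₁ ≤ G₂` holds for the template of positive-definite quadratic forms and invertible
linear maps, yet (b) the sum lift `G₁^⊕` does not simulate `G₂`. -/
theorem sum_lift_fails_for_quadratics :
    (∀ n : ℕ, 1 ≤ n → ∀ A₁ A₂ : Matrix (Fin n) (Fin n) ℝ, IsUnit A₁ → IsUnit A₂ →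
      ∀ γ : ℝ, 0 < γ →
      ∀ Pb Pc : Matrix (Fin n) (Fin n) ℝ, Pb.PosDef → Pc.PosDef →
      (∀ x, quadForm Pb x ≥ γ * quadForm Pb (A₁.mulVec x)) →
      (∀ x, quadForm Pb x ≥ γ * quadForm Pc (A₂.mulVec x)) →
      (∀ x, quadForm Pc x ≥ γ * quadForm Pc (A₂.mulVec x)) →
      (∀ x, quadForm Pc x ≥ γ * quadForm Pb (A₁.mulVec x)) →
      ∃ Pb' Pc' : Matrix (Fin n) (Fin n) ℝ, Pb'.PosDef ∧ Pc'.PosDef ∧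
        (∀ x, quadForm Pb' x ≥ γ * quadForm Pb' (A₁.mulVec x)) ∧
        (∀ x, quadForm Pb' x ≥ γ * quadForm Pc' (A₁.mulVec x)) ∧
        (∀ x, quadForm Pc' x ≥ γ * quadForm Pc' (A₂.mulVec x)) ∧
        (∀ x, quadForm Pc' x ≥ γ * quadForm Pb' (A₂.mulVec x))) ∧
    ¬ SimulatesOn {M : Multiset (Fin 2) | M ≠ 0} (sumLiftEdges G1edges) G2edges := by
  refine ⟨fun n _ A₁ A₂ hA₁ hA₂ γ hγ Pb Pc hPb hPc hbb hbc hcc hcb => ?_, ?_⟩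
  · exact ⟨scaledPullback γ A₁ Pb, scaledPullback γ A₂ Pc,
      hPb.scaledPullback hA₁ hγ, hPc.scaledPullback hA₂ hγ,
      quadForm_scaledPullback_le hγ.le hbb A₁, quadForm_scaledPullback_le hγ.le hbc A₁,
      quadForm_scaledPullback_le hγ.le hcc A₂, quadForm_scaledPullback_le hγ.le hcb A₂⟩
  · rintro ⟨R, hR, hE⟩
    obtain ⟨a, ha⟩ := Multiset.exists_mem_of_ne_zero (hR 1)
    have ha₀ := eq_label_of_mem_sumLiftEdges_G1edges (hE 0 1 0 (by simp [G2edges])) ha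
    have ha₁ := eq_label_of_mem_sumLiftEdges_G1edges (hE 1 1 1 (by simp [G2edges])) ha
    exact zero_ne_one (ha₀.symm.trans ha₁)
end

section
/- Let G = (S, E) be a path-complete labeled digraph on a finite alphabet Σ with S finite. If G is connected and sink-free, then for every T ≥ 0 the T-forward composition lift G^{∘T} is connected. Dually, if G is connected and source-free, then for every T ≥ 0 the T-backward composition lift G^{∘−T} is connected. -/
/-!
The memory of a node of a composition lift is a shift register: following a base edge labelled
`i` pushes `i` in front of the memory and drops its oldest letter.  Since `G` is sink-free, one can
walk `T` steps from any node; the memory at the end is read off the walk alone, so any two lift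
nodes over the same base node are connected.  Every base edge lifts from every memory, hence
connectivity of `G` carries over.  The backward lift is a shift register for the transpose of `G`.
-/

open Filter

section UndirectedAdj

variable {N A : Type*}

def undirectedAdj (F : Set (N × N × A)) (u v : N) : Prop :=
  ∃ i, (u, v, i) ∈ F ∨ (v, u, i) ∈ F

instance (F : Set (N × N × A)) : Std.Symm (undirectedAdj F) :=
  ⟨fun _ _ ⟨i, h⟩ => ⟨i, h.symm⟩⟩

theorem undirectedAdj_transposeEdges (F : Set (N × N × A)) :
    undirectedAdj (transposeEdges F) = undirectedAdj F := by
  ext u v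
  exact exists_congr fun _ => or_comm

theorem connectedOn_transposeEdges_iff {V : Set N} {F : Set (N × N × A)} :
    ConnectedOn V (transposeEdges F) ↔ ConnectedOn V F := by
  change (∀ x ∈ V, ∀ y ∈ V, Relation.ReflTransGen (undirectedAdj (transposeEdges F)) x y) ↔
    ∀ x ∈ V, ∀ y ∈ V, Relation.ReflTransGen (undirectedAdj F) x y
  rw [undirectedAdj_transposeEdges]

end UndirectedAdj

theorem List.take_cons_take {α : Type*} (i : α) (l : List α) (n : ℕ) :
    (i :: l.take n).take n = (i :: l).take n := by
  cases n <;> simp [List.take_take]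

def IsShiftLift {S A : Type*} (E : Set (S × S × A)) (F : Set ((S × List A) × (S × List A) × A))
    (T : ℕ) : Prop :=
  ∀ a b i, (a, b, i) ∈ E → ∀ w : List A, w.length = T →
    undirectedAdj F (a, w) (b, (i :: w).take T)

namespace IsShiftLift

variable {S A : Type*} {E : Set (S × S × A)} {F : Set ((S × List A) × (S × List A) × A)}
  {T : ℕ}

theorem exists_walk (hF : IsShiftLift E F T) (hsink : ∀ s : S, ∃ (b : S) (i : A), (s, b, i) ∈ E)
    (n : ℕ) (a : S) :
    ∃ (c : S) (u : List A), u.length = n ∧ ∀ w : List A, w.length = T →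
      Relation.ReflTransGen (undirectedAdj F) (a, w) (c, (u ++ w).take T) := by
  induction n with
  | zero => exact ⟨a, [], rfl, fun w hw => by rw [List.nil_append, List.take_of_length_le hw.le]⟩
  | succ n ih =>
    obtain ⟨c, u, hu, hwalk⟩ := ih
    obtain ⟨b, i, hcb⟩ := hsink c
    refine ⟨b, i :: u, by simp [hu], fun w hw => (hwalk w hw).tail ?_⟩
    have hstep := hF c b i hcb ((u ++ w).take T) (by simp [hw])
    rwa [List.take_cons_take] at hstep

/-- After `T` steps the memory no longer depends on where it started. -/
theorem reflTransGen_of_fst_eq (hF : IsShiftLift E F T)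
    (hsink : ∀ s : S, ∃ (b : S) (i : A), (s, b, i) ∈ E) (a : S) {w w' : List A}
    (hw : w.length = T) (hw' : w'.length = T) :
    Relation.ReflTransGen (undirectedAdj F) (a, w) (a, w') := by
  obtain ⟨c, u, hu, hwalk⟩ := hF.exists_walk hsink T a
  have hw_to := hwalk w hw
  have hw'_to := hwalk w' hw'
  rw [List.take_left' hu] at hw_to hw'_to
  exact hw_to.trans (Std.Symm.symm _ _ hw'_to)

theorem reflTransGen_of_base (hF : IsShiftLift E F T)
    (hsink : ∀ s : S, ∃ (b : S) (i : A), (s, b, i) ∈ E) {w : List A} (hw : w.length = T)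
    {a b : S} (hab : Relation.ReflTransGen (undirectedAdj E) a b) :
    Relation.ReflTransGen (undirectedAdj F) (a, w) (b, w) := by
  refine Relation.ReflTransGen.lift' (fun s => (s, w)) ?_ a b hab
  have hlen : ∀ i : A, ((i :: w).take T).length = T := fun i => by simp [hw]
  rintro a b ⟨i, hab | hba⟩
  · exact .head (hF a b i hab w hw) (hF.reflTransGen_of_fst_eq hsink b (hlen i) hw)
  · exact (hF.reflTransGen_of_fst_eq hsink a hw (hlen i)).tail
      (Std.Symm.symm _ _ (hF b a i hba w hw))

theorem connectedOn (hF : IsShiftLift E F T)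
    (hsink : ∀ s : S, ∃ (b : S) (i : A), (s, b, i) ∈ E)
    (hconn : ConnectedOn (Set.univ : Set S) E) :
    ConnectedOn {p : S × List A | p.2.length = T} F := by
  rintro ⟨a, w⟩ (hw : w.length = T) ⟨b, v⟩ (hv : v.length = T)
  exact (hF.reflTransGen_of_base hsink hw (hconn a trivial b trivial)).trans
    (hF.reflTransGen_of_fst_eq hsink b hw hv)

end IsShiftLift

theorem isShiftLift_fwdLiftEdges {S A : Type*} (E : Set (S × S × A)) (T : ℕ) :
    IsShiftLift E (fwdLiftEdges E T) T := by
  intro a b i hab w hw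
  cases T with
  | zero => exact ⟨i, .inl ⟨a, b, i, hab, by simp [List.length_eq_zero_iff.1 hw]⟩⟩
  | succ T =>
    obtain ⟨l, j, rfl⟩ : ∃ l j, w = l ++ [j] :=
      w.eq_nil_or_concat'.resolve_left (List.ne_nil_of_length_eq_add_one hw)
    have hl : l.length = T := by simpa using hw
    exact ⟨j, .inl ⟨a, b, i, l, j, hab, hl, by simp [List.take_left' hl]⟩⟩

theorem isShiftLift_bwdLiftEdges {S A : Type*} (E : Set (S × S × A)) (T : ℕ) :
    IsShiftLift (transposeEdges E) (bwdLiftEdges E T) T := by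
  intro b a i (hab : (a, b, i) ∈ E) w hw
  cases T with
  | zero => exact ⟨i, .inr ⟨a, b, i, hab, by simp [List.length_eq_zero_iff.1 hw]⟩⟩
  | succ T =>
    obtain ⟨l, j, rfl⟩ : ∃ l j, w = l ++ [j] :=
      w.eq_nil_or_concat'.resolve_left (List.ne_nil_of_length_eq_add_one hw)
    have hl : l.length = T := by simpa using hw
    exact ⟨j, .inr ⟨a, b, i, l, j, hab, hl, by simp [List.take_left' hl]⟩⟩

theorem comp_lift_preserves_connectedness_general {S A : Type*}
    (E : Set (S × S × A)) :
    (ConnectedOn (Set.univ : Set S) E → (∀ s : S, ∃ (b : S) (i : A), (s, b, i) ∈ E) →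
      ∀ T : ℕ, ConnectedOn {p : S × List A | p.2.length = T} (fwdLiftEdges E T)) ∧
    (ConnectedOn (Set.univ : Set S) E → (∀ s : S, ∃ (a : S) (i : A), (a, s, i) ∈ E) →
      ∀ T : ℕ, ConnectedOn {p : S × List A | p.2.length = T} (bwdLiftEdges E T)) :=
  ⟨fun hconn hsink T => (isShiftLift_fwdLiftEdges E T).connectedOn hsink hconn,
    fun hconn hsrc T => (isShiftLift_bwdLiftEdges E T).connectedOn hsrc
      (connectedOn_transposeEdges_iff.2 hconn)⟩

/-- Lemma: `T`-composition lifts preserve connectedness.  If a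
path-complete graph is connected and sink-free then every `T`-forward composition lift
is connected; dually, if it is connected and source-free then every `T`-backward
composition lift is connected. -/
theorem comp_lift_preserves_connectedness {S A : Type*} [Fintype S] [Fintype A]
    (E : Set (S × S × A)) (hpc : PathComplete E) :
    (ConnectedOn (Set.univ : Set S) E → (∀ s : S, ∃ (b : S) (i : A), (s, b, i) ∈ E) →
      ∀ T : ℕ, ConnectedOn {p : S × List A | p.2.length = T} (fwdLiftEdges E T)) ∧
    (ConnectedOn (Set.univ : Set S) E → (∀ s : S, ∃ (a : S) (i : A), (a, s, i) ∈ E) →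
      ∀ T : ℕ, ConnectedOn {p : S × List A | p.2.length = T} (bwdLiftEdges E T)) :=
  comp_lift_preserves_connectedness_general E
end

section
/- Let n ≥ 1, let A₁, A₂ ∈ GL(n, ℝ) be invertible matrices, let γ > 0, and let V_b, V_c ∈ Lyap₀(ℝⁿ) satisfy the inequalities of G₁: V_b(x) ≥ γ V_b(A₁ x), V_b(x) ≥ γ V_c(A₂ x), V_c(x) ≥ γ V_c(A₂ x) and V_c(x) ≥ γ V_b(A₁ x) for all x ∈ ℝⁿ. Then the functions V_{b'} := V_b ∘ A₁ and V_{c'} := V_c ∘ A₂ belong to Lyap₀(ℝⁿ) and satisfy the inequalities of G₂ with the same γ: V_{b'}(x) ≥ γ V_{b'}(A₁ x), V_{b'}(x) ≥ γ V_{c'}(A₁ x), V_{c'}(x) ≥ γ V_{c'}(A₂ x) and V_{c'}(x) ≥ γ V_{b'}(A₂ x) for all x ∈ ℝⁿ. -/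
open Filter

lemma isKInfty_comp_mul {α : ℝ → ℝ} (hα : IsKInfty α) {c : ℝ} (hc : 0 < c) :
    IsKInfty (fun t => α (c * t)) := by
  obtain ⟨hcont, hmono, hzero, htop⟩ := hα
  refine ⟨hcont.comp (continuous_const.mul continuous_id), ?_, by simpa using hzero, ?_⟩
  · intro a b hab
    exact hmono (by nlinarith)
  · exact htop.comp (Tendsto.const_mul_atTop hc tendsto_id)

lemma isLyap_comp {n : ℕ} (A : EuclideanSpace ℝ (Fin n) ≃L[ℝ] EuclideanSpace ℝ (Fin n))
    {V : EuclideanSpace ℝ (Fin n) → ℝ} (hV : IsLyap V) :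
    IsLyap (fun x => V (A x)) := by
  obtain ⟨hcont, hzero, hpos, α₁, α₂, hα₁, hα₂, hb⟩ := hV
  refine ⟨hcont.comp A.continuous, by simpa using hzero, ?_, ?_⟩
  · intro x hx
    exact hpos _ (by simpa using hx)
  · set c₂ : ℝ := max ‖(A : EuclideanSpace ℝ (Fin n) →L[ℝ] EuclideanSpace ℝ (Fin n))‖ 1 with hc₂
    set d : ℝ := max ‖(A.symm : EuclideanSpace ℝ (Fin n) →L[ℝ] EuclideanSpace ℝ (Fin n))‖ 1
      with hd
    have hc₂pos : 0 < c₂ := lt_of_lt_of_le one_pos (le_max_right _ _)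
    have hdpos : 0 < d := lt_of_lt_of_le one_pos (le_max_right _ _)
    refine ⟨fun t => α₁ (d⁻¹ * t), fun t => α₂ (c₂ * t),
      isKInfty_comp_mul hα₁ (inv_pos.mpr hdpos), isKInfty_comp_mul hα₂ hc₂pos, fun x => ?_⟩
    have hAx : ‖A x‖ ≤ c₂ * ‖x‖ := by
      calc ‖A x‖ ≤ ‖(A : EuclideanSpace ℝ (Fin n) →L[ℝ] EuclideanSpace ℝ (Fin n))‖ * ‖x‖ :=
            (A : EuclideanSpace ℝ (Fin n) →L[ℝ] EuclideanSpace ℝ (Fin n)).le_opNorm x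
        _ ≤ c₂ * ‖x‖ := by
            apply mul_le_mul_of_nonneg_right (le_max_left _ _) (norm_nonneg _)
    have hxA : ‖x‖ ≤ d * ‖A x‖ := by
      calc ‖x‖ = ‖A.symm (A x)‖ := by simp
        _ ≤ ‖(A.symm : EuclideanSpace ℝ (Fin n) →L[ℝ] EuclideanSpace ℝ (Fin n))‖ * ‖A x‖ :=
            (A.symm : EuclideanSpace ℝ (Fin n) →L[ℝ] EuclideanSpace ℝ (Fin n)).le_opNorm _
        _ ≤ d * ‖A x‖ := by
            apply mul_le_mul_of_nonneg_right (le_max_left _ _) (norm_nonneg _)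
    constructor
    · refine le_trans (hα₁.2.1.monotone ?_) (hb (A x)).1
      rw [inv_mul_le_iff₀ hdpos] at *
      linarith [hxA]
    · exact le_trans (hb (A x)).2 (hα₂.2.1.monotone hAx)

/-- If `V_b, V_c ∈ Lyap₀(ℝⁿ)` satisfy the Lyapunov inequalities of
`G₁` for invertible linear maps `A₁, A₂` and some `γ > 0`, then `V_{b'} := V_b ∘ A₁`
and `V_{c'} := V_c ∘ A₂` are in `Lyap₀(ℝⁿ)` and satisfy the inequalities of `G₂`
with the same `γ`. -/
theorem g1_implies_g2_quadratic_free {n : ℕ} (hn : 1 ≤ n)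
    (A₁ A₂ : EuclideanSpace ℝ (Fin n) ≃L[ℝ] EuclideanSpace ℝ (Fin n))
    (γ : ℝ) (hγ : 0 < γ)
    (Vb Vc : EuclideanSpace ℝ (Fin n) → ℝ) (hVb : IsLyap Vb) (hVc : IsLyap Vc)
    (h1 : ∀ x, Vb x ≥ γ * Vb (A₁ x)) (h2 : ∀ x, Vb x ≥ γ * Vc (A₂ x))
    (h3 : ∀ x, Vc x ≥ γ * Vc (A₂ x)) (h4 : ∀ x, Vc x ≥ γ * Vb (A₁ x)) :
    IsLyap (fun x => Vb (A₁ x)) ∧ IsLyap (fun x => Vc (A₂ x)) ∧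
    (∀ x, Vb (A₁ x) ≥ γ * Vb (A₁ (A₁ x))) ∧
    (∀ x, Vb (A₁ x) ≥ γ * Vc (A₂ (A₁ x))) ∧
    (∀ x, Vc (A₂ x) ≥ γ * Vc (A₂ (A₂ x))) ∧
    (∀ x, Vc (A₂ x) ≥ γ * Vb (A₁ (A₂ x))) := by
  exact ⟨isLyap_comp A₁ hVb, isLyap_comp A₂ hVc,
    fun x => h1 (A₁ x), fun x => h2 (A₁ x), fun x => h3 (A₂ x), fun x => h4 (A₂ x)⟩
end

section
/- For the path-complete labeled digraphs G₁ and G₂ there is no simulation relation in either direction: G₁ does not simulate G₂, and G₂ does not simulate G₁. -/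
open Filter

/-- There is no simulation relation between `G₁` and `G₂`
in either direction. -/
theorem no_simulation_between_G1_G2 :
    ¬ Simulates G1edges G2edges ∧ ¬ Simulates G2edges G1edges := by
  constructor
  · rintro ⟨R, h⟩
    have h1 := h 0 1 0 (by simp [G2edges])
    have h2 := h 1 0 1 (by simp [G2edges])
    have h3 := h 0 0 0 (by simp [G2edges])
    rcases (by decide : ∀ x : Fin 2, x = 0 ∨ x = 1) (R 0) with hR0 | hR0 <;>
      rcases (by decide : ∀ x : Fin 2, x = 0 ∨ x = 1) (R 1) with hR1 | hR1 <;>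
      simp_all [G1edges, Prod.ext_iff]
  · rintro ⟨R, h⟩
    have h1 := h 0 1 1 (by simp [G1edges])
    have h2 := h 1 0 0 (by simp [G1edges])
    have h3 := h 0 0 0 (by simp [G1edges])
    rcases (by decide : ∀ x : Fin 2, x = 0 ∨ x = 1) (R 0) with hR0 | hR0 <;>
      rcases (by decide : ∀ x : Fin 2, x = 0 ∨ x = 1) (R 1) with hR1 | hR1 <;>
      simp_all [G2edges, Prod.ext_iff]
end

section
/- Let n ≥ 1, let A₁, A₂ ∈ GL(n, ℝ) be invertible matrices, and let V_a, V_b, V_c : ℝⁿ → ℝ satisfy the inequalities of G_φ: V_a(x) ≥ V_a(A₁ x), V_a(x) ≥ V_b(A₁ x), V_b(x) ≥ V_a(A₂ x), V_a(x) ≥ V_c(A₂ x) and V_c(x) ≥ V_a(A₂ x) for all x ∈ ℝⁿ. Then the functions V_{a'} := V_a and V_{b'} := V_a ∘ A₂ satisfy the inequalities of G_ψ: V_{a'}(x) ≥ V_{a'}(A₁ x), V_{a'}(x) ≥ V_{b'}(A₁ x), V_{a'}(x) ≥ V_{b'}(A₂ x) and V_{b'}(x) ≥ V_{a'}(A₂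 x) for all x ∈ ℝⁿ. Moreover, if V_a, V_b, V_c ∈ Lyap₀(ℝⁿ) then V_{a'}, V_{b'} ∈ Lyap₀(ℝⁿ). -/
open Filter

/-- Step 1 of Example: Conjecture (ii) ⇏ (i).  If `V_a, V_b, V_c`
satisfy the Lyapunov inequalities of `G_φ` for invertible linear maps `A₁, A₂`, then
`V_{a'} := V_a` and `V_{b'} := V_a ∘ A₂` satisfy the inequalities of `G_ψ`; moreover
membership in `Lyap₀(ℝⁿ)` is preserved. -/
theorem gphi_implies_gpsi {n : ℕ} (hn : 1 ≤ n)
    (A₁ A₂ : EuclideanSpace ℝ (Fin n) ≃L[ℝ] EuclideanSpace ℝ (Fin n))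
    (Va Vb Vc : EuclideanSpace ℝ (Fin n) → ℝ)
    (h1 : ∀ x, Va x ≥ Va (A₁ x)) (h2 : ∀ x, Va x ≥ Vb (A₁ x))
    (h3 : ∀ x, Vb x ≥ Va (A₂ x)) (h4 : ∀ x, Va x ≥ Vc (A₂ x))
    (h5 : ∀ x, Vc x ≥ Va (A₂ x)) :
    ((∀ x, Va x ≥ Va (A₁ x)) ∧
     (∀ x, Va x ≥ Va (A₂ (A₁ x))) ∧
     (∀ x, Va x ≥ Va (A₂ (A₂ x))) ∧
     (∀ x, Va (A₂ x) ≥ Va (A₂ x))) ∧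
    (IsLyap Va → IsLyap Vb → IsLyap Vc →
      IsLyap Va ∧ IsLyap (fun x => Va (A₂ x))) := by
  refine ⟨⟨h1, fun x => le_trans (h3 (A₁ x)) (h2 x),
    fun x => le_trans (h5 (A₂ x)) (h4 x), fun x => le_refl _⟩, ?_⟩
  intro hVa _ _
  refine ⟨hVa, ?_⟩
  obtain ⟨hcont, hzero, hpos, α₁, α₂, hα₁, hα₂, hbd⟩ := hVa
  set B : EuclideanSpace ℝ (Fin n) →L[ℝ] EuclideanSpace ℝ (Fin n) := A₂.toContinuousLinearMap
  set Bi : EuclideanSpace ℝ (Fin n) →L[ℝ] EuclideanSpace ℝ (Fin n) := A₂.symm.toContinuousLinearMap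
  have hc₁ : (0:ℝ) < (‖Bi‖ + 1)⁻¹ := by positivity
  have hc₂ : (0:ℝ) < ‖B‖ + 1 := by positivity
  have hlow : ∀ x : EuclideanSpace ℝ (Fin n), (‖Bi‖ + 1)⁻¹ * ‖x‖ ≤ ‖A₂ x‖ := by
    intro x
    have h : ‖x‖ ≤ (‖Bi‖ + 1) * ‖A₂ x‖ := by
      calc ‖x‖ = ‖Bi (A₂ x)‖ := by simp [Bi]
        _ ≤ ‖Bi‖ * ‖A₂ x‖ := Bi.le_opNorm _
        _ ≤ (‖Bi‖ + 1) * ‖A₂ x‖ := by nlinarith [norm_nonneg (A₂ x)]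
    rw [inv_mul_le_iff₀ (by positivity : (0:ℝ) < ‖Bi‖ + 1)]
    exact h
  have hhigh : ∀ x : EuclideanSpace ℝ (Fin n), ‖A₂ x‖ ≤ (‖B‖ + 1) * ‖x‖ := by
    intro x
    calc ‖A₂ x‖ = ‖B x‖ := by simp [B]
      _ ≤ ‖B‖ * ‖x‖ := B.le_opNorm _
      _ ≤ (‖B‖ + 1) * ‖x‖ := by nlinarith [norm_nonneg x]
  refine ⟨hcont.comp A₂.continuous, by simp [hzero], ?_, ?_⟩
  · intro x hx
    exact hpos _ (by simpa using hx)
  · refine ⟨fun t => α₁ ((‖Bi‖ + 1)⁻¹ * t), fun t => α₂ ((‖B‖ + 1) * t), ?_, ?_, ?_⟩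
    · exact ⟨hα₁.1.comp (continuous_const.mul continuous_id),
        fun s t h => hα₁.2.1 (by nlinarith), by show α₁ _ = 0; rw [mul_zero]; exact hα₁.2.2.1,
        hα₁.2.2.2.comp (Tendsto.const_mul_atTop hc₁ tendsto_id)⟩
    · exact ⟨hα₂.1.comp (continuous_const.mul continuous_id),
        fun s t h => hα₂.2.1 (by nlinarith), by show α₂ _ = 0; rw [mul_zero]; exact hα₂.2.2.1,
        hα₂.2.2.2.comp (Tendsto.const_mul_atTop hc₂ tendsto_id)⟩
    · intro x
      exact ⟨le_trans (hα₁.2.1.monotone (hlow x)) (hbd (A₂ x)).1,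
        le_trans (hbd (A₂ x)).2 (hα₂.2.1.monotone (hhigh x))⟩
end
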